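/- arXiv:2509.24531 — 3 statements merged into one kernel-verified Lean document; each statement's English description precedes it below -/
import Mathlib

section
/- Let E be a real inner product space, let x₀, x₁ ∈ E, let λ > 0, and let x : ℝ → E be a path such that t ↦ ‖x₁ - x t‖²/(1-t)² is integrable on [0,1]. Then ∫₀¹ ‖x₁ - x t‖² / (λ⁴ · (exp((1-t)/λ²) - 1)²) dt ≤ ∫₀¹ ‖x₁ - x t‖² / (1-t)² dt. (Equivalently, with g_t = 1 and θ_t = 1/(2λ²), the overall cost J(u*_DB) = ½∫₀¹ ‖x₁ - x_t‖²/(λ⁴(e^{(1-t)/λ²}-1)²) dt of the Diffusion Bridge optimal controller is at most the cost J(u*_FM) = ½∫₀¹ ‖x₁ - x_t‖²/(1-t)² dt of the Flow Matching optimal controller.) -/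
open MeasureTheory Set

/-!
Since `exp y ≥ 1 + y`, the diffusion-bridge denominator `λ⁴ (exp ((1 - t)/λ²) - 1)²` dominates
the flow-matching denominator `(1 - t)²` on `[0, 1]`, so the integrands compare pointwise.
As the smaller integrand is nonnegative, the comparison of integrals needs integrability of the
larger one only.
-/

lemma intervalIntegral.integral_mono_of_nonneg_Ioo {μ : Measure ℝ} [NullSingletonClass μ]
    {f g : ℝ → ℝ} {a b : ℝ} (hab : a ≤ b) (hg : IntervalIntegrable g μ a b)
    (hf : ∀ t ∈ Ioo a b, 0 ≤ f t) (hfg : ∀ t ∈ Ioo a b, f t ≤ g t) :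
    ∫ t in a..b, f t ∂μ ≤ ∫ t in a..b, g t ∂μ := by
  simp only [intervalIntegral.integral_of_le hab, integral_Ioc_eq_integral_Ioo]
  exact integral_mono_of_nonneg (ae_restrict_of_forall_mem measurableSet_Ioo hf)
    (hg.1.mono_set Ioo_subset_Ioc_self) (ae_restrict_of_forall_mem measurableSet_Ioo hfg)

lemma Real.le_mul_exp_div_sub_one {c : ℝ} (hc : 0 < c) (s : ℝ) :
    s ≤ c * (Real.exp (s / c) - 1) := by
  have h := mul_le_mul_of_nonneg_left (Real.add_one_le_exp (s / c)) hc.le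
  rw [mul_add, mul_div_cancel₀ s hc.ne'] at h
  linarith

lemma Real.sq_le_pow_four_mul_exp_div_sq_sub_one_sq {lam s : ℝ} (hlam : lam ≠ 0) (hs : 0 ≤ s) :
    s ^ 2 ≤ lam ^ 4 * (Real.exp (s / lam ^ 2) - 1) ^ 2 := by
  calc s ^ 2 ≤ (lam ^ 2 * (Real.exp (s / lam ^ 2) - 1)) ^ 2 :=
        pow_le_pow_left₀ hs (Real.le_mul_exp_div_sub_one (by positivity) s) 2
    _ = lam ^ 4 * (Real.exp (s / lam ^ 2) - 1) ^ 2 := by ring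

theorem db_cost_le_fm_cost_general {E : Type*} [NormedAddCommGroup E] [InnerProductSpace ℝ E]
    (x₁ : E) (lam : ℝ) (hlam : 0 < lam) (x : ℝ → E)
    (hInt : IntervalIntegrable (fun t => ‖x₁ - x t‖ ^ 2 / (1 - t) ^ 2) volume 0 1) :
    (∫ t in (0:ℝ)..1, ‖x₁ - x t‖ ^ 2 / (lam ^ 4 * (Real.exp ((1 - t) / lam ^ 2) - 1) ^ 2))
      ≤ ∫ t in (0:ℝ)..1, ‖x₁ - x t‖ ^ 2 / (1 - t) ^ 2 := by
  refine intervalIntegral.integral_mono_of_nonneg_Ioo zero_le_one hInt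
    (fun t _ => by positivity) fun t ht => ?_
  have hs : 0 < 1 - t := sub_pos.mpr ht.2
  exact div_le_div_of_nonneg_left (sq_nonneg _) (pow_pos hs 2)
    (Real.sq_le_pow_four_mul_exp_div_sq_sub_one_sq hlam.ne' hs.le)

/-- With `g_t = 1` and `θ_t = 1/(2λ²)`, the overall cost of the Diffusion Bridge optimal
controller is at most the cost of the Flow Matching optimal controller. -/
theorem db_cost_le_fm_cost {E : Type*} [NormedAddCommGroup E] [InnerProductSpace ℝ E]
    (x₀ x₁ : E) (lam : ℝ) (hlam : 0 < lam) (x : ℝ → E)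
    (hInt : IntervalIntegrable (fun t => ‖x₁ - x t‖ ^ 2 / (1 - t) ^ 2) volume 0 1) :
    (∫ t in (0:ℝ)..1, ‖x₁ - x t‖ ^ 2 / (lam ^ 4 * (Real.exp ((1 - t) / lam ^ 2) - 1) ^ 2))
      ≤ ∫ t in (0:ℝ)..1, ‖x₁ - x t‖ ^ 2 / (1 - t) ^ 2 :=
  db_cost_le_fm_cost_general x₁ lam hlam x hInt
end

section
/- Let E be a real inner product space, x₀, x₁ ∈ E, and let η : ℝ → E be a path with continuous derivative η' on [0,1], with η 0 = x₀ and η 1 = x₁. If ∫₀¹ ‖η' t‖² dt = ‖x₁ - x₀‖², then η t = x₀ + t • (x₁ - x₀) for all t ∈ [0,1]; that is, the straight-line interpolation is the unique minimizer of the energy among C¹ admissible paths. -/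
/-!
Writing `v = x₁ - x₀`, the fundamental theorem of calculus gives `∫₀¹ ⟪η', v⟫ = ‖v‖²`, so expanding
the square yields `∫₀¹ ‖η' - v‖² = ∫₀¹ ‖η'‖² - ‖v‖²`. Equality in the energy bound therefore forces
the continuous nonnegative integrand `‖η' - v‖²` to vanish on `[0,1]`, and a path with constant
velocity `v` is the straight line.
-/

open MeasureTheory Set

open scoped RealInnerProductSpace

theorem eqOn_zero_of_integral_eq_zero_of_nonneg {f : ℝ → ℝ} {a b : ℝ} (hab : a < b)
    (hf : ContinuousOn f (Icc a b)) (hf_nonneg : ∀ x ∈ Icc a b, 0 ≤ f x)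
    (h_integral : ∫ x in a..b, f x = 0) : EqOn f 0 (Icc a b) := by
  intro c hc
  by_contra hfc
  have hpos : 0 < ∫ x in a..b, f x :=
    intervalIntegral.integral_pos hab hf (fun x hx => hf_nonneg x (Ioc_subset_Icc_self hx))
      ⟨c, hc, (hf_nonneg c hc).lt_of_ne' hfc⟩
  exact hpos.ne' h_integral

section Paths

variable {E : Type*} [NormedAddCommGroup E] [InnerProductSpace ℝ E] {η η' : ℝ → E} {a b : ℝ}

theorem integral_inner_deriv_eq (hab : a ≤ b) (hderiv : ∀ t ∈ Icc a b, HasDerivAt η (η' t) t)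
    (hcont : ContinuousOn η' (Icc a b)) (v : E) :
    ∫ t in a..b, ⟪η' t, v⟫ = ⟪η b - η a, v⟫ := by
  rw [inner_sub_left]
  refine intervalIntegral.integral_eq_sub_of_hasDerivAt (f := fun s => ⟪η s, v⟫)
    (fun t ht => ?_) ((hcont.inner continuousOn_const).intervalIntegrable_of_Icc hab)
  rw [uIcc_of_le hab] at ht
  simpa using (hderiv t ht).inner ℝ (hasDerivAt_const t v)

theorem integral_norm_deriv_sub_sq (hab : a ≤ b) (hderiv : ∀ t ∈ Icc a b, HasDerivAt η (η' t) t)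
    (hcont : ContinuousOn η' (Icc a b)) (v : E) :
    ∫ t in a..b, ‖η' t - v‖ ^ 2 =
      (∫ t in a..b, ‖η' t‖ ^ 2) - 2 * ⟪η b - η a, v⟫ + (b - a) * ‖v‖ ^ 2 := by
  have h_energy : IntervalIntegrable (fun t => ‖η' t‖ ^ 2) volume a b :=
    (hcont.norm.pow 2).intervalIntegrable_of_Icc hab
  have h_inner : IntervalIntegrable (fun t => 2 * ⟪η' t, v⟫) volume a b :=
    ((hcont.inner continuousOn_const).intervalIntegrable_of_Icc hab).const_mul 2
  simp_rw [norm_sub_sq_real]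
  rw [intervalIntegral.integral_add (h_energy.sub h_inner) intervalIntegrable_const,
    intervalIntegral.integral_sub h_energy h_inner, intervalIntegral.integral_const_mul,
    integral_inner_deriv_eq hab hderiv hcont, intervalIntegral.integral_const, smul_eq_mul]

theorem eq_add_smul_of_hasDerivAt_const {v : E}
    (hderiv : ∀ t ∈ Icc a b, HasDerivAt η v t) :
    ∀ t ∈ Icc a b, η t = η a + (t - a) • v := by
  have hline : ∀ t, HasDerivAt (fun s : ℝ => η a + (s - a) • v) v t := fun t => by
    simpa using (((hasDerivAt_id t).sub_const a).smul_const v).const_add (η a)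
  exact eq_of_has_deriv_right_eq
    (fun t ht => (hderiv t (Ico_subset_Icc_self ht)).hasDerivWithinAt)
    (fun t _ => (hline t).hasDerivWithinAt)
    (fun t ht => (hderiv t ht).continuousAt.continuousWithinAt)
    (fun t _ => (hline t).continuousAt.continuousWithinAt) (by simp)

end Paths

/-- Uniqueness of the energy minimizer: a `C¹` path from `x₀` to `x₁` whose energy equals
`‖x₁ - x₀‖²` is the straight-line interpolation on `[0,1]`. -/
theorem fm_energy_minimizer_unique {E : Type*} [NormedAddCommGroup E] [InnerProductSpace ℝ E]
    (x₀ x₁ : E) (η η' : ℝ → E)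
    (hderiv : ∀ t ∈ Set.Icc (0:ℝ) 1, HasDerivAt η (η' t) t)
    (hcont : ContinuousOn η' (Set.Icc (0:ℝ) 1))
    (h0 : η 0 = x₀) (h1 : η 1 = x₁)
    (henergy : (∫ t in (0:ℝ)..1, ‖η' t‖ ^ 2) = ‖x₁ - x₀‖ ^ 2) :
    ∀ t ∈ Set.Icc (0:ℝ) 1, η t = x₀ + t • (x₁ - x₀) := by
  have h_deficit : ∫ t in (0:ℝ)..1, ‖η' t - (x₁ - x₀)‖ ^ 2 = 0 := by
    rw [integral_norm_deriv_sub_sq zero_le_one hderiv hcont, henergy, h0, h1,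
      real_inner_self_eq_norm_sq]
    ring
  have h_velocity : ∀ t ∈ Icc (0:ℝ) 1, η' t = x₁ - x₀ := fun t ht => by
    have h := eqOn_zero_of_integral_eq_zero_of_nonneg zero_lt_one
      ((hcont.sub continuousOn_const).norm.pow 2) (fun _ _ => sq_nonneg _) h_deficit ht
    simpa [sub_eq_zero] using h
  intro t ht
  have h_line := eq_add_smul_of_hasDerivAt_const
    (fun s hs => h_velocity s hs ▸ hderiv s hs) t ht
  rwa [h0, sub_zero] at h_line
end

section
/- Let d ≥ 1 and let μ be a Borel probability measure on ℝᵈ with ∫ ‖x‖² dμ(x) < ∞. Let u : ℝᵈ → ℝ be convex, μ-integrable, and differentiable at μ-almost every x, and let T : ℝᵈ → ℝᵈ be a Borel map with T(x) = ∇u(x) for μ-almost every x and ∫ ‖T(x)‖² dμ(x) < ∞. Set ν = T_# μ. Then for every coupling γ of μ and ν, ∫ ½‖x - y‖² dγ(x,y) ≥ ∫ ½‖x - T(x)‖² dμ(x); that is, T is an optimal transport map from μ to ν for the quadratic cost c(x,y) = ½‖x - y‖². -/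
/-!
Fenchel–Young: with the convex conjugate `u*(y) = sup_x (⟪x, y⟫ - u x)` one has
`⟪x, y⟫ ≤ u x + u* y` for all `x, y`, with equality when `y = ∇u(x)`, by the subgradient
inequality of the convex function `u`. Integrating against a coupling `γ` of `μ` and `ν = T_#μ`
and using only its marginals gives `∫ ⟪x, y⟫ dγ ≤ ∫ u dμ + ∫ u* dν = ∫ ⟪x, T x⟫ dμ`. Since
`½‖x - y‖² = ½‖x‖² + ½‖y‖² - ⟪x, y⟫` and the second moments depend only on the marginals,
this is the claimed inequality of costs.
-/

open MeasureTheory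
open scoped RealInnerProductSpace

section

variable {E : Type*} [NormedAddCommGroup E] [InnerProductSpace ℝ E]

theorem ConvexOn.inner_gradient_le_sub [CompleteSpace E] {s : Set E} {u : E → ℝ}
    (hu : ConvexOn ℝ s u) {x z p : E} (hx : x ∈ s) (hz : z ∈ s) (hp : HasGradientAt u p x) :
    ⟪p, z - x⟫ ≤ u z - u x := by
  let ℓ : ℝ →ᵃ[ℝ] E := AffineMap.lineMap x z
  have hℓ : HasDerivAt (u ∘ ℓ) ⟪p, z - x⟫ 0 := by
    have hux : HasFDerivAt u (InnerProductSpace.toDual ℝ E p) (ℓ 0) := by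
      simpa [ℓ] using hp.hasFDerivAt
    simpa using hux.comp_hasDerivAt (0 : ℝ) AffineMap.hasDerivAt_lineMap
  have := (hu.comp_affineMap ℓ).le_slope_of_hasDerivAt (by simpa [ℓ] using hx)
    (by simpa [ℓ] using hz) zero_lt_one hℓ
  simpa [slope_def_field, ℓ] using this

/-- Valued in `EReal`: a real-valued supremum would silently be `0` wherever it is infinite. -/
noncomputable def convexConjugate (u : E → ℝ) (y : E) : EReal :=
  ⨆ x, ((⟪x, y⟫ - u x : ℝ) : EReal)

theorem le_convexConjugate (u : E → ℝ) (x y : E) :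
    ((⟪x, y⟫ - u x : ℝ) : EReal) ≤ convexConjugate u y :=
  le_iSup (fun x => ((⟪x, y⟫ - u x : ℝ) : EReal)) x

theorem lowerSemicontinuous_convexConjugate (u : E → ℝ) :
    LowerSemicontinuous (convexConjugate u) :=
  lowerSemicontinuous_iSup fun _ => (continuous_coe_real_ereal.comp
    ((continuous_const.inner continuous_id).sub continuous_const)).lowerSemicontinuous

theorem measurable_convexConjugate [MeasurableSpace E] [OpensMeasurableSpace E] (u : E → ℝ) :
    Measurable (convexConjugate u) :=
  (lowerSemicontinuous_convexConjugate u).measurable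

theorem inner_le_add_toReal_convexConjugate {u : E → ℝ} {y : E}
    (hy : convexConjugate u y ≠ ⊤) (x : E) :
    ⟪x, y⟫ ≤ u x + (convexConjugate u y).toReal := by
  have := EReal.toReal_le_toReal (le_convexConjugate u x y) (EReal.coe_ne_bot _) hy
  rw [EReal.toReal_coe] at this
  linarith

theorem ConvexOn.convexConjugate_eq_of_hasGradientAt [CompleteSpace E] {u : E → ℝ}
    (hu : ConvexOn ℝ Set.univ u) {x p : E} (hp : HasGradientAt u p x) :
    convexConjugate u p = ((⟪x, p⟫ - u x : ℝ) : EReal) := by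
  refine le_antisymm (iSup_le fun z => EReal.coe_le_coe_iff.mpr ?_) (le_convexConjugate u x p)
  have := hu.inner_gradient_le_sub (Set.mem_univ x) (Set.mem_univ z) hp
  rw [inner_sub_right, real_inner_comm z p, real_inner_comm x p] at this
  linarith

variable {α β : Type*} [MeasurableSpace α] [MeasurableSpace β] {μ : Measure α} {ν : Measure β}

theorem MeasureTheory.MeasurePreserving.integral_comp_of_aestronglyMeasurable
    {G : Type*} [NormedAddCommGroup G] [NormedSpace ℝ G] {φ : α → β}
    (hφ : MeasurePreserving φ μ ν) {g : β → G} (hg : AEStronglyMeasurable g ν) :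
    ∫ a, g (φ a) ∂μ = ∫ b, g b ∂ν := by
  rw [← hφ.map_eq] at hg ⊢
  exact (integral_map hφ.measurable.aemeasurable hg).symm

theorem integral_le_integral_add_integral_of_ae_le_add {γ : Measure (α × β)}
    {c : α × β → ℝ} {φ : α → ℝ} {ψ : β → ℝ}
    (h₁ : MeasurePreserving Prod.fst γ μ) (h₂ : MeasurePreserving Prod.snd γ ν)
    (hc : Integrable c γ) (hφ : Integrable φ μ) (hψ : Integrable ψ ν)
    (hle : ∀ᵐ p ∂γ, c p ≤ φ p.1 + ψ p.2) :
    ∫ p, c p ∂γ ≤ ∫ x, φ x ∂μ + ∫ y, ψ y ∂ν := by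
  have hφ₁ : Integrable (fun p => φ p.1) γ := h₁.integrable_comp_of_integrable hφ
  have hψ₂ : Integrable (fun p => ψ p.2) γ := h₂.integrable_comp_of_integrable hψ
  calc ∫ p, c p ∂γ ≤ ∫ p, (φ p.1 + ψ p.2) ∂γ := integral_mono_ae hc (hφ₁.add hψ₂) hle
    _ = ∫ x, φ x ∂μ + ∫ y, ψ y ∂ν := by
      rw [integral_add hφ₁ hψ₂, h₁.integral_comp_of_aestronglyMeasurable hφ.aestronglyMeasurable,
        h₂.integral_comp_of_aestronglyMeasurable hψ.aestronglyMeasurable]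

theorem integrable_inner_of_integrable_sq_norm {f g : α → E} (hf : AEStronglyMeasurable f μ)
    (hg : AEStronglyMeasurable g μ) (hf2 : Integrable (fun a => ‖f a‖ ^ 2) μ)
    (hg2 : Integrable (fun a => ‖g a‖ ^ 2) μ) : Integrable (fun a => ⟪f a, g a⟫) μ := by
  refine (hf2.add hg2).mono' (hf.inner hg) (ae_of_all _ fun a => ?_)
  simp only [Pi.add_apply]
  linarith [norm_inner_le_norm (𝕜 := ℝ) (f a) (g a), two_mul_le_add_sq ‖f a‖ ‖g a‖,
    mul_nonneg (norm_nonneg (f a)) (norm_nonneg (g a))]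

theorem integral_half_norm_sub_sq {f g : α → E} (hf2 : Integrable (fun a => ‖f a‖ ^ 2) μ)
    (hg2 : Integrable (fun a => ‖g a‖ ^ 2) μ) (hfg : Integrable (fun a => ⟪f a, g a⟫) μ) :
    ∫ a, (1/2 : ℝ) * ‖f a - g a‖ ^ 2 ∂μ
      = (1/2) * ∫ a, ‖f a‖ ^ 2 ∂μ + (1/2) * ∫ a, ‖g a‖ ^ 2 ∂μ - ∫ a, ⟪f a, g a⟫ ∂μ := by
  have hf2' : Integrable (fun a => (1/2 : ℝ) * ‖f a‖ ^ 2) μ := hf2.const_mul _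
  have hg2' : Integrable (fun a => (1/2 : ℝ) * ‖g a‖ ^ 2) μ := hg2.const_mul _
  have hsum : Integrable (fun a => (1/2 : ℝ) * ‖f a‖ ^ 2 + (1/2) * ‖g a‖ ^ 2) μ := hf2'.add hg2'
  calc ∫ a, (1/2 : ℝ) * ‖f a - g a‖ ^ 2 ∂μ
        = ∫ a, ((1/2) * ‖f a‖ ^ 2 + (1/2) * ‖g a‖ ^ 2 - ⟪f a, g a⟫) ∂μ := by
          congr 1 with a
          rw [norm_sub_sq_real]
          ring
    _ = _ := by
      rw [integral_sub hsum hfg, integral_add hf2' hg2', integral_const_mul, integral_const_mul]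

theorem integral_inner_le_integral_inner_gradient [CompleteSpace E] [MeasurableSpace E]
    [BorelSpace E] [SecondCountableTopology E] {μ : Measure E} {γ : Measure (E × E)}
    {u : E → ℝ} {T : E → E} (hu : ConvexOn ℝ Set.univ u) (hui : Integrable u μ)
    (hT : Measurable T) (hTgrad : ∀ᵐ x ∂μ, HasGradientAt u (T x) x)
    (hxT : Integrable (fun x => ⟪x, T x⟫) μ) (hγ : Integrable (fun p => ⟪p.1, p.2⟫) γ)
    (h₁ : MeasurePreserving Prod.fst γ μ) (h₂ : MeasurePreserving Prod.snd γ (μ.map T)) :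
    ∫ p, ⟪p.1, p.2⟫ ∂γ ≤ ∫ x, ⟪x, T x⟫ ∂μ := by
  set v : E → ℝ := fun y => (convexConjugate u y).toReal
  have hv : Measurable v := (measurable_convexConjugate u).ereal_toReal
  have hT' : MeasurePreserving T μ (μ.map T) := ⟨hT, rfl⟩
  have hconjT : ∀ᵐ x ∂μ, convexConjugate u (T x) = ((⟪x, T x⟫ - u x : ℝ) : EReal) :=
    hTgrad.mono fun x hx => hu.convexConjugate_eq_of_hasGradientAt hx
  have hvT : (fun x => v (T x)) =ᵐ[μ] fun x => ⟪x, T x⟫ - u x :=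
    hconjT.mono fun x hx => by simp only [v, hx, EReal.toReal_coe]
  have hvi : Integrable v (μ.map T) :=
    (hT'.integrable_comp hv.aestronglyMeasurable).mp ((hxT.sub hui).congr hvT.symm)
  have hfin : ∀ᵐ p ∂γ, convexConjugate u p.2 ≠ ⊤ := by
    refine h₂.quasiMeasurePreserving.ae (p := fun y => convexConjugate u y ≠ ⊤)
      ((ae_map_iff hT.aemeasurable ?_).2 ?_)
    · exact ((measurable_convexConjugate u) (measurableSet_singleton ⊤)).compl
    filter_upwards [hconjT] with x hx
    exact hx ▸ EReal.coe_ne_top _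
  calc ∫ p, ⟪p.1, p.2⟫ ∂γ ≤ ∫ x, u x ∂μ + ∫ y, v y ∂(μ.map T) :=
        integral_le_integral_add_integral_of_ae_le_add h₁ h₂ hγ hui hvi
          (hfin.mono fun p hp => inner_le_add_toReal_convexConjugate hp p.1)
    _ = ∫ x, ⟪x, T x⟫ ∂μ := by
      rw [← hT'.integral_comp_of_aestronglyMeasurable hv.aestronglyMeasurable,
        integral_congr_ae hvT, integral_sub hxT hui]
      ring

end

theorem brenier_map_optimal_general (d : ℕ)
    (μ : Measure (EuclideanSpace ℝ (Fin d)))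
    (hμ2 : Integrable (fun x => ‖x‖ ^ 2) μ)
    (u : EuclideanSpace ℝ (Fin d) → ℝ) (hconv : ConvexOn ℝ Set.univ u)
    (hui : Integrable u μ)
    (T : EuclideanSpace ℝ (Fin d) → EuclideanSpace ℝ (Fin d)) (hT : Measurable T)
    (hTgrad : ∀ᵐ x ∂μ, HasGradientAt u (T x) x)
    (hT2 : Integrable (fun x => ‖T x‖ ^ 2) μ)
    (γ : Measure (EuclideanSpace ℝ (Fin d) × EuclideanSpace ℝ (Fin d)))
    (hfst : γ.map Prod.fst = μ) (hsnd : γ.map Prod.snd = μ.map T) :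
    (∫ x, (1/2 : ℝ) * ‖x - T x‖ ^ 2 ∂μ)
      ≤ ∫ p, (1/2 : ℝ) * ‖p.1 - p.2‖ ^ 2 ∂γ := by
  have h₁ : MeasurePreserving Prod.fst γ μ := ⟨measurable_fst, hfst⟩
  have h₂ : MeasurePreserving Prod.snd γ (μ.map T) := ⟨measurable_snd, hsnd⟩
  have hT' : MeasurePreserving T μ (μ.map T) := ⟨hT, rfl⟩
  have hsq : ∀ ρ : Measure (EuclideanSpace ℝ (Fin d)),
      AEStronglyMeasurable (fun y => ‖y‖ ^ 2) ρ := fun _ =>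
    (continuous_norm.pow 2).aestronglyMeasurable
  have hx2 : Integrable (fun p => ‖p.1‖ ^ 2) γ := h₁.integrable_comp_of_integrable hμ2
  have hy2 : Integrable (fun p => ‖p.2‖ ^ 2) γ :=
    h₂.integrable_comp_of_integrable ((hT'.integrable_comp (hsq _)).mp hT2)
  have hxT := integrable_inner_of_integrable_sq_norm aestronglyMeasurable_id
    hT.aestronglyMeasurable hμ2 hT2
  have hγ := integrable_inner_of_integrable_sq_norm measurable_fst.aestronglyMeasurable
    measurable_snd.aestronglyMeasurable hx2 hy2
  rw [integral_half_norm_sub_sq hμ2 hT2 hxT, integral_half_norm_sub_sq hx2 hy2 hγ,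
    h₁.integral_comp_of_aestronglyMeasurable (hsq μ),
    h₂.integral_comp_of_aestronglyMeasurable (hsq _),
    ← hT'.integral_comp_of_aestronglyMeasurable (hsq _)]
  linarith [integral_inner_le_integral_inner_gradient hconv hui hT hTgrad hxT hγ h₁ h₂]

/-- Optimality in non-compact spaces: if `μ` is a Borel probability measure on `ℝᵈ` with finite
second moment, `u` is convex and `μ`-a.e. differentiable with gradient `T` having finite second
moment, then `T` is an optimal transport map from `μ` to `ν = T_#μ` for the quadratic cost:
every coupling `γ` of `μ` and `ν` has quadratic cost at least `∫ ½‖x - T(x)‖² dμ`. -/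
theorem brenier_map_optimal (d : ℕ) (hd : 1 ≤ d)
    (μ : Measure (EuclideanSpace ℝ (Fin d))) [IsProbabilityMeasure μ]
    (hμ2 : Integrable (fun x => ‖x‖ ^ 2) μ)
    (u : EuclideanSpace ℝ (Fin d) → ℝ) (hconv : ConvexOn ℝ Set.univ u)
    (hui : Integrable u μ)
    (T : EuclideanSpace ℝ (Fin d) → EuclideanSpace ℝ (Fin d)) (hT : Measurable T)
    (hTgrad : ∀ᵐ x ∂μ, HasGradientAt u (T x) x)
    (hT2 : Integrable (fun x => ‖T x‖ ^ 2) μ)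
    (γ : Measure (EuclideanSpace ℝ (Fin d) × EuclideanSpace ℝ (Fin d)))
    [IsProbabilityMeasure γ]
    (hfst : γ.map Prod.fst = μ) (hsnd : γ.map Prod.snd = μ.map T) :
    (∫ x, (1/2 : ℝ) * ‖x - T x‖ ^ 2 ∂μ)
      ≤ ∫ p, (1/2 : ℝ) * ‖p.1 - p.2‖ ^ 2 ∂γ :=
  brenier_map_optimal_general d μ hμ2 u hconv hui T hT hTgrad hT2 γ hfst hsnd
end
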